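/- arXiv:2503.07461 — 2 statements merged into one kernel-verified Lean document; each statement's English description precedes it below -/
import Mathlib

section
/- Fix P > 0, X ≥ 0, Z ≥ 0, D with 0 < D ≤ P, and v ≤ 0 (representing V_s ≤ 0), η_c, η_d ∈ (0,1], discount factor δ := e^{−rt} > 0. Define on the set B := ({0} × [0,Γ]) ∪ ([0,1] × {0}) the function F(a,c) := (η_c·a·P − c/η_d)·v + δ·X·(D − (1−a)·P − c) − δ·Z·min(D, (1−a)·P + c). Then the minimum of F over B is attained at: (0,Γ) if −v ≤ δ·η_d·X; at (0,0) if δ·η_d·X ≤ −v ≤ (δ/η_c)·X; at (1 − D/P, 0) if (δ/η_c)·X ≤ −v ≤ (δ/η_c)·(X + Z); and at (1,0) if (δ/η_c)·(X + Z) ≤ −v. -/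
/-! On `B` the problem splits into two one-variable problems that share the point `(0, 0)`.
On the discharge segment `a = 0` the sold power `P + c` exceeds `D`, so `F` is affine in `c`
with slope `-v / ηd - δ X`. On the charge segment `c = 0`, `F` is, up to a constant, a
piecewise-linear function of the sold power `E = (1 - a) P` with a kink at `E = D`, slope
`ηc (-v) - δ (X + Z)` below it and `ηc (-v) - δ X` above it. Each price regime fixes the signs
of these slopes and hence both segment minimisers; in every regime one of them is `(0, 0)`,
which lies on the other segment, so the other minimiser is the global one. -/

open Set

section ExtrOn

variable {α β γ : Type*} [Preorder γ]

theorem IsMinOn.union_of_mem {f : α → γ} {s t : Set α} {a b : α}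
    (ha : IsMinOn f s a) (hb : IsMinOn f t b) (hbs : b ∈ s) : IsMinOn f (s ∪ t) a :=
  isMinOn_iff.2 fun _ hx => hx.elim (fun hx => ha hx) fun hx => (ha hbs).trans (hb hx)

theorem IsMinOn.singleton_prod {f : α × β → γ} {a : α} {t : Set β} {b : β}
    (h : IsMinOn (fun y => f (a, y)) t b) : IsMinOn f ({a} ×ˢ t) (a, b) := by
  rw [Set.singleton_prod]
  rintro _ ⟨y, hy, rfl⟩
  exact h hy

theorem IsMinOn.prod_singleton {f : α × β → γ} {s : Set α} {a : α} {b : β}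
    (h : IsMinOn (fun x => f (x, b)) s a) : IsMinOn f (s ×ˢ {b}) (a, b) := by
  rw [Set.prod_singleton]
  rintro _ ⟨x, hx, rfl⟩
  exact h hx

end ExtrOn

section Kinked

def kinkedLinear (α β D E : ℝ) : ℝ := α * E - β * min D E

variable {α β D P : ℝ}

theorem isMinOn_kinkedLinear_right (hα : α ≤ 0) (hβ : 0 ≤ β) (hDP : D ≤ P) :
    IsMinOn (kinkedLinear α β D) (Iic P) P := by
  refine isMinOn_iff.2 fun E (hE : E ≤ P) => ?_
  have : β * min D E ≤ β * D := mul_le_mul_of_nonneg_left (min_le_left D E) hβ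
  simp only [kinkedLinear, min_eq_left hDP]
  nlinarith

theorem isMinOn_kinkedLinear_kink (hα : 0 ≤ α) (hαβ : α ≤ β) :
    IsMinOn (kinkedLinear α β D) univ D := by
  refine isMinOn_iff.2 fun E _ => ?_
  simp only [kinkedLinear, min_self]
  rcases le_total D E with hDE | hED
  · rw [min_eq_left hDE]; nlinarith
  · rw [min_eq_right hED]; nlinarith

theorem isMinOn_kinkedLinear_zero (hβ : 0 ≤ β) (hβα : β ≤ α) (hD : 0 ≤ D) :
    IsMinOn (kinkedLinear α β D) (Ici 0) 0 := by
  refine isMinOn_iff.2 fun E (hE : 0 ≤ E) => ?_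
  have : β * min D E ≤ β * E := mul_le_mul_of_nonneg_left (min_le_right D E) hβ
  simp only [kinkedLinear, min_eq_right hD]
  nlinarith

end Kinked

section Objective

noncomputable def hjbObjective (P X Z D v ηc ηd δ : ℝ) (q : ℝ × ℝ) : ℝ :=
  (ηc * q.1 * P - q.2 / ηd) * v + δ * X * (D - (1 - q.1) * P - q.2)
    - δ * Z * min D ((1 - q.1) * P + q.2)

variable {P Γ X Z D v ηc ηd δ : ℝ}

theorem hjbObjective_discharge {c : ℝ} (hDP : D ≤ P) (hc : 0 ≤ c) :
    hjbObjective P X Z D v ηc ηd δ (0, c)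
      = δ * X * (D - P) - δ * Z * D + (-v / ηd - δ * X) * c := by
  rw [hjbObjective, min_eq_left (by linarith)]
  ring

theorem hjbObjective_charge (a : ℝ) :
    hjbObjective P X Z D v ηc ηd δ (a, 0)
      = ηc * v * P + δ * X * D + kinkedLinear (ηc * -v - δ * X) (δ * Z) D ((1 - a) * P) := by
  rw [hjbObjective, kinkedLinear]
  ring_nf

theorem isMinOn_hjbObjective_discharge_full (hDP : D ≤ P) (h : -v / ηd ≤ δ * X) :
    IsMinOn (hjbObjective P X Z D v ηc ηd δ) ({0} ×ˢ Icc 0 Γ) (0, Γ) := by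
  refine IsMinOn.singleton_prod <| isMinOn_iff.2 fun c ⟨hc0, hcΓ⟩ => ?_
  rw [hjbObjective_discharge hDP hc0, hjbObjective_discharge hDP (hc0.trans hcΓ)]
  nlinarith

theorem isMinOn_hjbObjective_discharge_idle (hDP : D ≤ P) (h : δ * X ≤ -v / ηd) :
    IsMinOn (hjbObjective P X Z D v ηc ηd δ) ({0} ×ˢ Icc 0 Γ) (0, 0) := by
  refine IsMinOn.singleton_prod <| isMinOn_iff.2 fun c ⟨hc0, _⟩ => ?_
  rw [hjbObjective_discharge hDP hc0, hjbObjective_discharge hDP le_rfl]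
  nlinarith

theorem isMinOn_hjbObjective_charge (hP : 0 ≤ P) {a₀ : ℝ}
    (h : IsMinOn (kinkedLinear (ηc * -v - δ * X) (δ * Z) D) (Icc 0 P) ((1 - a₀) * P)) :
    IsMinOn (hjbObjective P X Z D v ηc ηd δ) (Icc 0 1 ×ˢ {0}) (a₀, 0) := by
  have hmaps : MapsTo (fun a : ℝ => (1 - a) * P) (Icc 0 1) (Icc 0 P) := fun a ⟨ha0, ha1⟩ =>
    ⟨by nlinarith, by nlinarith⟩
  refine IsMinOn.prod_singleton ?_
  simp only [hjbObjective_charge]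
  exact isMinOn_const.add (h.comp_mapsTo hmaps rfl)

theorem isMinOn_hjbObjective_charge_none (hP : 0 ≤ P) (hDP : D ≤ P) (hδZ : 0 ≤ δ * Z)
    (h : ηc * -v ≤ δ * X) :
    IsMinOn (hjbObjective P X Z D v ηc ηd δ) (Icc 0 1 ×ˢ {0}) (0, 0) := by
  refine isMinOn_hjbObjective_charge hP ?_
  rw [sub_zero, one_mul]
  exact (isMinOn_kinkedLinear_right (by linarith) hδZ hDP).on_subset Icc_subset_Iic_self

theorem isMinOn_hjbObjective_charge_kink (hP : 0 < P) (hX : δ * X ≤ ηc * -v)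
    (hXZ : ηc * -v ≤ δ * (X + Z)) :
    IsMinOn (hjbObjective P X Z D v ηc ηd δ) (Icc 0 1 ×ˢ {0}) (1 - D / P, 0) := by
  refine isMinOn_hjbObjective_charge hP.le ?_
  rw [sub_sub_cancel, div_mul_cancel₀ D hP.ne']
  exact (isMinOn_kinkedLinear_kink (by linarith) (by linarith)).on_subset (subset_univ _)

theorem isMinOn_hjbObjective_charge_full (hP : 0 ≤ P) (hD : 0 ≤ D) (hδZ : 0 ≤ δ * Z)
    (h : δ * (X + Z) ≤ ηc * -v) :
    IsMinOn (hjbObjective P X Z D v ηc ηd δ) (Icc 0 1 ×ˢ {0}) (1, 0) := by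
  refine isMinOn_hjbObjective_charge hP ?_
  rw [sub_self, zero_mul]
  exact (isMinOn_kinkedLinear_zero hδZ (by linarith) hD).on_subset Icc_subset_Ici_self

end Objective

theorem stmt_3 (P Γ X Z D v ηc ηd δ : ℝ)
    (hP : 0 < P) (hΓ : 0 ≤ Γ) (hX : 0 ≤ X) (hZ : 0 ≤ Z)
    (hD : 0 < D) (hDP : D ≤ P) (hv : v ≤ 0)
    (hηc : ηc ∈ Ioc (0:ℝ) 1) (hηd : ηd ∈ Ioc (0:ℝ) 1) (hδ : 0 < δ)
    (B : Set (ℝ × ℝ)) (hB : B = ({0} ×ˢ Icc (0:ℝ) Γ) ∪ (Icc (0:ℝ) 1 ×ˢ {0}))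
    (F : ℝ × ℝ → ℝ)
    (hF : F = fun q => (ηc * q.1 * P - q.2 / ηd) * v
        + δ * X * (D - (1 - q.1) * P - q.2)
        - δ * Z * min D ((1 - q.1) * P + q.2)) :
    (-v ≤ δ * ηd * X → IsMinOn F B (0, Γ)) ∧
    (δ * ηd * X ≤ -v ∧ -v ≤ (δ / ηc) * X → IsMinOn F B (0, 0)) ∧
    ((δ / ηc) * X ≤ -v ∧ -v ≤ (δ / ηc) * (X + Z) → IsMinOn F B (1 - D / P, 0)) ∧
    ((δ / ηc) * (X + Z) ≤ -v → IsMinOn F B (1, 0)) := by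
  obtain ⟨hηc0, hηc1⟩ := hηc
  obtain ⟨hηd0, hηd1⟩ := hηd
  replace hF : F = hjbObjective P X Z D v ηc ηd δ := hF
  subst hB hF
  have hδZ : 0 ≤ δ * Z := by positivity
  have hηc_v : ηc * -v ≤ -v := mul_le_of_le_one_left (by linarith) hηc1
  have hηc_v_div : ηc * -v ≤ -v / ηd := hηc_v.trans (le_div_self (by linarith) hηd0 hηd1)
  have hidle : ((0 : ℝ), (0 : ℝ)) ∈ Icc (0 : ℝ) 1 ×ˢ ({0} : Set ℝ) := by simp
  simp only [div_mul_eq_mul_div, div_le_iff₀' hηc0, le_div_iff₀' hηc0]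
  refine ⟨fun h => ?_, fun ⟨h1, h2⟩ => ?_, fun ⟨h1, h2⟩ => ?_, fun h => ?_⟩
  · have h' : ηc * -v ≤ δ * X :=
      calc ηc * -v ≤ -v := hηc_v
        _ ≤ δ * ηd * X := h
        _ ≤ δ * X := mul_le_mul_of_nonneg_right (mul_le_of_le_one_right hδ.le hηd1) hX
    have hslope : -v / ηd ≤ δ * X := (div_le_iff₀ hηd0).2 (by linarith)
    exact (isMinOn_hjbObjective_discharge_full hDP hslope).union_of_mem
      (isMinOn_hjbObjective_charge_none hP.le hDP hδZ h') (by simp [hΓ])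
  · rw [union_comm]
    exact (isMinOn_hjbObjective_charge_none hP.le hDP hδZ h2).union_of_mem
      (isMinOn_hjbObjective_discharge_idle hDP ((le_div_iff₀ hηd0).2 (by linarith))) hidle
  · rw [union_comm]
    exact (isMinOn_hjbObjective_charge_kink hP h1 h2).union_of_mem
      (isMinOn_hjbObjective_discharge_idle hDP (h1.trans hηc_v_div)) hidle
  · rw [union_comm]
    exact (isMinOn_hjbObjective_charge_full hP.le hD.le hδZ h).union_of_mem
      (isMinOn_hjbObjective_discharge_idle hDP (by linarith)) hidle
end

section
/- Fix P ≥ 0, Γ > 0, X ≥ 0, Z ≥ 0, D with P ≤ D ≤ P + Γ, v ≤ 0, η_c, η_d ∈ (0,1], δ > 0. Define on B := ({0} × [0,Γ]) ∪ ([0,1] × {0}) the function F(a,c) := (η_c·a·P − c/η_d)·v + δ·X·(D − (1−a)·P − c) − δ·Z·min(D, (1−a)·P + c). Then the minimum of F over B is attained at: (0,Γ) if −v ≤ δ·η_d·X; at (0, D − P) if δ·η_d·X ≤ −v ≤ δ·η_d·(X + Z); at (0,0) if δ·η_d·(X + Z) ≤ −v ≤ (δ/η_c)·(X + Z); and at (1,0)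 if (δ/η_c)·(X + Z) ≤ −v. -/
/-!
With `s = -v / ηd`, on the vertical edge `F (0, c) = K + (s - δ X) c - δ Z min (D - P) c`, a
convex piecewise linear function with slopes `s - δ (X + Z)` and then `s - δ X`, while on the
horizontal edge `F (a, 0) = K + a P (ηc v + δ (X + Z))` is linear; the two agree at the origin.
The four regimes are exactly the sign patterns of these slopes, and since `ηc, ηd ≤ 1` the
thresholds are ordered, so the edge not containing the minimiser never goes below the origin.
-/

open Set

noncomputable def hjbCost (P X Z D v ηc ηd δ : ℝ) (q : ℝ × ℝ) : ℝ :=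
  (ηc * q.1 * P - q.2 / ηd) * v + δ * X * (D - (1 - q.1) * P - q.2)
    - δ * Z * min D ((1 - q.1) * P + q.2)

section Kink

variable {p q e : ℝ}

theorem isMinOn_kink_of_nonpos {Γ : ℝ} (hp : p ≤ 0) (hq : 0 ≤ q) (he : e ≤ Γ) :
    IsMinOn (fun c => p * c - q * min e c) (Iic Γ) Γ := isMinOn_iff.2 fun c (hc : c ≤ Γ) => by
  rw [min_eq_left he]
  nlinarith [mul_nonneg_of_nonpos_of_nonpos hp (sub_nonpos.2 hc),
    mul_nonneg hq (sub_nonneg.2 (min_le_left e c))]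

theorem isMinOn_kink_of_nonpos_of_nonneg (hpq : p - q ≤ 0) (hp : 0 ≤ p) :
    IsMinOn (fun c => p * c - q * min e c) univ e := fun c _ => by
  simp only [min_self, mem_ofPred_eq]
  rcases le_total c e with hce | hec
  · rw [min_eq_right hce]; nlinarith
  · rw [min_eq_left hec]; nlinarith

theorem isMinOn_kink_of_nonneg (hpq : 0 ≤ p - q) (hq : 0 ≤ q) (he : 0 ≤ e) :
    IsMinOn (fun c => p * c - q * min e c) (Ici 0) 0 := fun c (hc : 0 ≤ c) => by
  have : min e c ≤ c := min_le_right e c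
  simp only [min_eq_right he, mem_ofPred_eq]
  nlinarith

end Kink

section Axes

variable {f : ℝ × ℝ → ℝ} {φ : ℝ → ℝ} {K k Γ : ℝ}

theorem profile_zero_eq_zero (hΓ : 0 ≤ Γ) (hvert : ∀ c ∈ Icc 0 Γ, f (0, c) = K + φ c)
    (hhor : ∀ a ∈ Icc 0 1, f (a, 0) = K + a * k) : φ 0 = 0 := by
  have := (hvert 0 ⟨le_rfl, hΓ⟩).symm.trans (hhor 0 ⟨le_rfl, zero_le_one⟩)
  linarith

theorem isMinOn_axes_of_isMinOn_vertical {c₀ : ℝ} (hΓ : 0 ≤ Γ)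
    (hvert : ∀ c ∈ Icc 0 Γ, f (0, c) = K + φ c) (hhor : ∀ a ∈ Icc 0 1, f (a, 0) = K + a * k)
    (hc₀ : c₀ ∈ Icc 0 Γ) (hφ : IsMinOn φ (Icc 0 Γ) c₀) (hk : 0 ≤ k) :
    IsMinOn f ({0} ×ˢ Icc 0 Γ ∪ Icc 0 1 ×ˢ {0}) (0, c₀) := by
  have hφ0 := profile_zero_eq_zero hΓ hvert hhor
  rintro ⟨a, c⟩ (⟨rfl : a = 0, hc⟩ | ⟨ha, rfl : c = 0⟩)
  · simpa only [mem_ofPred_eq, hvert c hc, hvert c₀ hc₀, add_le_add_iff_left] using hφ hc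
  · have := hφ ⟨le_rfl, hΓ⟩
    simp only [mem_ofPred_eq, hhor a ha, hvert c₀ hc₀, hφ0] at this ⊢
    nlinarith [ha.1]

theorem isMinOn_axes_of_nonpos (hΓ : 0 ≤ Γ)
    (hvert : ∀ c ∈ Icc 0 Γ, f (0, c) = K + φ c) (hhor : ∀ a ∈ Icc 0 1, f (a, 0) = K + a * k)
    (hφ : IsMinOn φ (Icc 0 Γ) 0) (hk : k ≤ 0) :
    IsMinOn f ({0} ×ˢ Icc 0 Γ ∪ Icc 0 1 ×ˢ {0}) (1, 0) := by
  have hφ0 := profile_zero_eq_zero hΓ hvert hhor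
  rintro ⟨a, c⟩ (⟨rfl : a = 0, hc⟩ | ⟨ha, rfl : c = 0⟩)
  · have := hφ hc
    simp only [mem_ofPred_eq, hhor 1 ⟨zero_le_one, le_rfl⟩, hvert c hc, hφ0] at this ⊢
    linarith
  · simp only [mem_ofPred_eq, hhor 1 ⟨zero_le_one, le_rfl⟩, hhor a ha]
    nlinarith [ha.2]

end Axes

variable {P X Z D v ηc ηd δ : ℝ}

theorem hjbCost_zero_left (c : ℝ) :
    hjbCost P X Z D v ηc ηd δ (0, c) =
      δ * X * (D - P) - δ * Z * P + ((-v / ηd - δ * X) * c - δ * Z * min (D - P) c) := by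
  have : min D (P + c) = P + min (D - P) c := by
    rw [← min_add_add_left, add_sub_cancel]
  simp only [hjbCost, mul_zero, zero_mul, sub_zero, one_mul, this]
  ring

theorem hjbCost_right_zero (hP : 0 ≤ P) (hPD : P ≤ D) {a : ℝ} (ha : 0 ≤ a) :
    hjbCost P X Z D v ηc ηd δ (a, 0) =
      δ * X * (D - P) - δ * Z * P + a * (P * (ηc * v + δ * (X + Z))) := by
  have : min D ((1 - a) * P + 0) = (1 - a) * P + 0 := min_eq_right <| by
    nlinarith [mul_nonneg ha hP]
  simp only [hjbCost, this]
  ring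

theorem mul_mul_le_div_mul {Y : ℝ} (hδ : 0 ≤ δ) (hY : 0 ≤ Y) (hηc : ηc ∈ Ioc 0 1)
    (hηd : ηd ≤ 1) : δ * ηd * Y ≤ δ / ηc * Y :=
  mul_le_mul_of_nonneg_right
    ((mul_le_of_le_one_right hδ hηd).trans (le_div_self hδ hηc.1 hηc.2)) hY

theorem stmt_4_general (P Γ X Z D v ηc ηd δ : ℝ)
    (hP : 0 ≤ P) (hΓ : 0 < Γ) (hX : 0 ≤ X) (hZ : 0 ≤ Z)
    (hPD : P ≤ D) (hDPG : D ≤ P + Γ)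
    (hηc : ηc ∈ Ioc (0:ℝ) 1) (hηd : ηd ∈ Ioc (0:ℝ) 1) (hδ : 0 < δ)
    (B : Set (ℝ × ℝ)) (hB : B = ({0} ×ˢ Icc (0:ℝ) Γ) ∪ (Icc (0:ℝ) 1 ×ˢ {0}))
    (F : ℝ × ℝ → ℝ)
    (hF : F = fun q => (ηc * q.1 * P - q.2 / ηd) * v
        + δ * X * (D - (1 - q.1) * P - q.2)
        - δ * Z * min D ((1 - q.1) * P + q.2)) :
    (-v ≤ δ * ηd * X → IsMinOn F B (0, Γ)) ∧
    (δ * ηd * X ≤ -v ∧ -v ≤ δ * ηd * (X + Z) → IsMinOn F B (0, D - P)) ∧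
    (δ * ηd * (X + Z) ≤ -v ∧ -v ≤ (δ / ηc) * (X + Z) → IsMinOn F B (0, 0)) ∧
    ((δ / ηc) * (X + Z) ≤ -v → IsMinOn F B (1, 0)) := by
  rw [hB, show F = hjbCost P X Z D v ηc ηd δ from hF]
  have hvert : ∀ c ∈ Icc 0 Γ, hjbCost P X Z D v ηc ηd δ (0, c) = _ :=
    fun c _ => hjbCost_zero_left c
  have hhor : ∀ a ∈ Icc (0 : ℝ) 1, hjbCost P X Z D v ηc ηd δ (a, 0) = _ :=
    fun a ha => hjbCost_right_zero hP hPD ha.1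
  have hXZ : 0 ≤ X + Z := add_nonneg hX hZ
  have hηη := mul_mul_le_div_mul hδ.le hXZ hηc hηd.2
  have hle_div {Y : ℝ} : -v ≤ δ * ηd * Y ↔ -v / ηd ≤ δ * Y := by
    rw [div_le_iff₀ hηd.1, mul_right_comm]
  have hdiv_le {Y : ℝ} : δ * ηd * Y ≤ -v ↔ δ * Y ≤ -v / ηd := by
    rw [le_div_iff₀ hηd.1, mul_right_comm]
  have hk (h : -v ≤ δ / ηc * (X + Z)) : 0 ≤ P * (ηc * v + δ * (X + Z)) := by
    rw [div_mul_eq_mul_div, le_div_iff₀ hηc.1] at h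
    exact mul_nonneg hP (by linarith)
  refine ⟨fun h => ?_, fun ⟨h₁, h₂⟩ => ?_, fun ⟨h₁, h₂⟩ => ?_, fun h => ?_⟩
  · have hXXZ : δ * ηd * X ≤ δ * ηd * (X + Z) :=
      mul_le_mul_of_nonneg_left (le_add_of_nonneg_right hZ) (mul_pos hδ hηd.1).le
    exact isMinOn_axes_of_isMinOn_vertical hΓ.le hvert hhor ⟨hΓ.le, le_rfl⟩
      ((isMinOn_kink_of_nonpos (by linarith [hle_div.1 h]) (by positivity) (by linarith)).on_subset
        Icc_subset_Iic_self) (hk ((h.trans hXXZ).trans hηη))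
  · exact isMinOn_axes_of_isMinOn_vertical hΓ.le hvert hhor ⟨by linarith, by linarith⟩
      ((isMinOn_kink_of_nonpos_of_nonneg (by linarith [hle_div.1 h₂]) (by linarith [hdiv_le.1 h₁])
        ).on_subset (subset_univ _)) (hk (h₂.trans hηη))
  · exact isMinOn_axes_of_isMinOn_vertical hΓ.le hvert hhor ⟨le_rfl, hΓ.le⟩
      ((isMinOn_kink_of_nonneg (by linarith [hdiv_le.1 h₁]) (by positivity) (by linarith)).on_subset
        fun _ hc => hc.1) (hk h₂)
  · have hk' : P * (ηc * v + δ * (X + Z)) ≤ 0 := by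
      rw [div_mul_eq_mul_div, div_le_iff₀ hηc.1] at h
      exact mul_nonpos_of_nonneg_of_nonpos hP (by linarith)
    exact isMinOn_axes_of_nonpos hΓ.le hvert hhor
      ((isMinOn_kink_of_nonneg (by linarith [hdiv_le.1 (hηη.trans h)]) (by positivity)
        (by linarith)).on_subset fun _ hc => hc.1) hk'

theorem stmt_4 (P Γ X Z D v ηc ηd δ : ℝ)
    (hP : 0 ≤ P) (hΓ : 0 < Γ) (hX : 0 ≤ X) (hZ : 0 ≤ Z)
    (hPD : P ≤ D) (hDPG : D ≤ P + Γ) (hv : v ≤ 0)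
    (hηc : ηc ∈ Ioc (0:ℝ) 1) (hηd : ηd ∈ Ioc (0:ℝ) 1) (hδ : 0 < δ)
    (B : Set (ℝ × ℝ)) (hB : B = ({0} ×ˢ Icc (0:ℝ) Γ) ∪ (Icc (0:ℝ) 1 ×ˢ {0}))
    (F : ℝ × ℝ → ℝ)
    (hF : F = fun q => (ηc * q.1 * P - q.2 / ηd) * v
        + δ * X * (D - (1 - q.1) * P - q.2)
        - δ * Z * min D ((1 - q.1) * P + q.2)) :
    (-v ≤ δ * ηd * X → IsMinOn F B (0, Γ)) ∧
    (δ * ηd * X ≤ -v ∧ -v ≤ δ * ηd * (X + Z) → IsMinOn F B (0, D - P)) ∧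
    (δ * ηd * (X + Z) ≤ -v ∧ -v ≤ (δ / ηc) * (X + Z) → IsMinOn F B (0, 0)) ∧
    ((δ / ηc) * (X + Z) ≤ -v → IsMinOn F B (1, 0)) :=
  stmt_4_general P Γ X Z D v ηc ηd δ hP hΓ hX hZ hPD hDPG hηc hηd hδ B hB F hF
end
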